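/- For every positive integer k, the formal power series identity ∑_{n≥0} q^{2n} (q^{2n+2};q²)_∞ (q^{2n+2k};q²)_∞ / (q^{2n+1};q²)_∞² = ∑_{n≥0} (q^{2k-1};q²)_n q^n / (q;q²)_{n+1} holds. -/

import Mathlib

open Finset PowerSeries

/-!
Cauchy's `q`-binomial theorem in base `q²`,
`(q^{α+β};q²)_∞ / (q^β;q²)_∞ = ∑ₙ (q^α;q²)ₙ / (q²;q²)ₙ · q^{βn}`,
holds because, after multiplying by `(q^β;q²)_∞`, both sides are families `w_β ≡ 1 mod q^β`
satisfying `w_β = (1 - q^{α+β}) w_{β+2}`, and such a family is determined by these conditions.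
With `α = 2k-1` and `β = 2n+1` it expands the factor `(q^{2n+2k};q²)_∞ / (q^{2n+1};q²)_∞`
of the `n`-th term of `F_{k,1}`. Since also `(q^{2n+2};q²)_∞ / (q^{2n+1};q²)_∞` is
`(q²;q²)_∞ / (q;q²)_∞ · (q;q²)ₙ / (q²;q²)ₙ`, after interchanging the two summations the
inner sum over `n` is again a `q`-binomial series, with `α = 1` and `β = 2j+2`, and it
collapses to `(q²;q²)_j / (q;q²)_{j+1}`.
-/

/-- `(q^a; q^2)_n = ∏_{j<n} (1 - q^(a+2j))` as a formal power series in `q`. -/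
noncomputable def P2 (a n : ℕ) : PowerSeries ℚ :=
  ∏ j ∈ Finset.range n, (1 - (PowerSeries.X : PowerSeries ℚ) ^ (a + 2 * j))

/-- `(q^a; q^2)_∞ = ∏_{j≥0} (1 - q^(a+2j))` (for `a ≥ 1`) as a formal power series:
the coefficient of `q^m` is that of any sufficiently long partial product. -/
noncomputable def P2inf (a : ℕ) : PowerSeries ℚ :=
  PowerSeries.mk fun m => PowerSeries.coeff m (P2 a (m + 1))

/-- The Andrews–El Bachraoui series
`F_{k,1}(q) = ∑_{n≥0} q^{2n} (q^{2n+2};q²)_∞ (q^{2n+2k};q²)_∞ / (q^{2n+1};q²)_∞²`,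
defined coefficientwise (the `n`-th term has order at least `2n`). -/
noncomputable def AEB (k : ℕ) : PowerSeries ℚ :=
  PowerSeries.mk fun m => ∑ n ∈ Finset.range (m + 1),
    PowerSeries.coeff m
      ((PowerSeries.X : PowerSeries ℚ) ^ (2 * n) * P2inf (2 * n + 2) *
        P2inf (2 * n + 2 * k) * (P2inf (2 * n + 1) ^ 2)⁻¹)

section OrderSum

variable {R : Type*} [CommRing R]

theorem eq_of_forall_X_pow_dvd_sub {f g : R⟦X⟧} (h : ∀ N, X ^ N ∣ f - g) : f = g := by
  ext m
  rw [← sub_eq_zero, ← map_sub]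
  exact X_pow_dvd_iff.mp (h (m + 1)) m m.lt_succ_self

theorem dvd_mul_sub_one {d u v : R} (hu : d ∣ u - 1) (hv : d ∣ v - 1) : d ∣ u * v - 1 := by
  rw [show u * v - 1 = (u - 1) * v + (v - 1) by ring]
  exact (hu.mul_right v).add hv

theorem X_pow_dvd_mul_X_pow {n e : ℕ} (c : R⟦X⟧) (h : n ≤ e) : X ^ n ∣ c * X ^ e :=
  (pow_dvd_pow X h).trans (dvd_mul_left _ _)

/-- The sum `∑ₙ f n`, read off coefficientwise: it is meant for sequences with `X ^ n ∣ f n`,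
for which the terms `n > m` do not contribute to the coefficient of `X ^ m`. -/
noncomputable def orderSum (f : ℕ → R⟦X⟧) : R⟦X⟧ :=
  mk fun m => ∑ n ∈ range (m + 1), coeff m (f n)

theorem coeff_orderSum (f : ℕ → R⟦X⟧) (m : ℕ) :
    coeff m (orderSum f) = ∑ n ∈ range (m + 1), coeff m (f n) :=
  coeff_mk _ _

theorem orderSum_comm (F : ℕ → ℕ → R⟦X⟧) :
    orderSum (fun n => orderSum (F n)) = orderSum fun j => orderSum fun n => F n j := by
  ext m
  simp only [coeff_orderSum]
  exact sum_comm

theorem orderSum_sub (f g : ℕ → R⟦X⟧) :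
    orderSum (fun n => f n - g n) = orderSum f - orderSum g := by
  ext m
  simp only [coeff_orderSum, map_sub, sum_sub_distrib]

theorem X_pow_dvd_orderSum {k : ℕ} {f : ℕ → R⟦X⟧} (h : ∀ n, X ^ k ∣ f n) :
    X ^ k ∣ orderSum f := by
  refine X_pow_dvd_iff.mpr fun m hm => ?_
  rw [coeff_orderSum]
  exact sum_eq_zero fun n _ => X_pow_dvd_iff.mp (h n) m hm

variable {f : ℕ → R⟦X⟧}

theorem X_pow_dvd_orderSum_sub_sum (hf : ∀ n, X ^ n ∣ f n) (N : ℕ) :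
    X ^ N ∣ orderSum f - ∑ n ∈ range N, f n := by
  refine X_pow_dvd_iff.mpr fun m hm => ?_
  rw [map_sub, coeff_orderSum, map_sum, sub_eq_zero]
  refine sum_subset (range_subset_range.mpr (by omega)) fun n hN hn => ?_
  exact X_pow_dvd_iff.mp (hf n) m (by simp only [mem_range] at hN hn; omega)

theorem mul_orderSum (g : R⟦X⟧) (hf : ∀ n, X ^ n ∣ f n) :
    g * orderSum f = orderSum fun n => g * f n := by
  ext m
  have h := X_pow_dvd_iff.mp ((X_pow_dvd_orderSum_sub_sum hf (m + 1)).mul_left g) m m.lt_succ_self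
  rw [mul_sub, map_sub, sub_eq_zero, mul_sum, map_sum] at h
  rw [h, coeff_orderSum]

theorem orderSum_eq_add (hf : ∀ n, X ^ n ∣ f n) :
    orderSum f = f 0 + orderSum fun n => f (n + 1) := by
  ext m
  rw [map_add, coeff_orderSum, coeff_orderSum, sum_range_succ', sum_range_succ,
    X_pow_dvd_iff.mp (hf (m + 1)) m m.lt_succ_self, add_zero, add_comm]

theorem one_sub_mul_orderSum (g : R⟦X⟧) (hf : ∀ n, X ^ n ∣ f n) :
    (1 - g) * orderSum f = f 0 + orderSum fun n => f (n + 1) - g * f n := by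
  rw [sub_mul, one_mul, mul_orderSum g hf, orderSum_sub, orderSum_eq_add hf, add_sub_assoc]

end OrderSum

section Inverse

variable {k : Type*} [Field k]

theorem constantCoeff_ne_zero_of_X_pow_dvd_sub_one {φ : k⟦X⟧} {n : ℕ} (hn : n ≠ 0)
    (h : X ^ n ∣ φ - 1) : constantCoeff φ ≠ 0 := by
  have h0 := X_dvd_iff.mp ((dvd_pow_self X hn).trans h)
  rw [map_sub, map_one, sub_eq_zero] at h0
  rw [h0]
  exact one_ne_zero

theorem mul_inv_eq_mul_inv_of_mul_eq {a b c d : k⟦X⟧} (hb : constantCoeff b ≠ 0)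
    (hd : constantCoeff d ≠ 0) (h : a * d = c * b) : a * b⁻¹ = c * d⁻¹ := by
  rw [eq_mul_inv_iff_mul_eq hd, mul_right_comm, h, mul_assoc, PowerSeries.mul_inv_cancel b hb,
    mul_one]

end Inverse

theorem P2_succ (a n : ℕ) : P2 a (n + 1) = P2 a n * (1 - X ^ (a + 2 * n)) :=
  prod_range_succ _ _

theorem P2_one (a : ℕ) : P2 a 1 = 1 - X ^ a := by
  simp [P2]

theorem P2_add (a n t : ℕ) : P2 a (n + t) = P2 a n * P2 (a + 2 * n) t := by
  simp only [P2, prod_range_add, mul_add, add_assoc]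

theorem X_pow_dvd_P2_sub_one (a n : ℕ) : X ^ a ∣ P2 a n - 1 := by
  induction n with
  | zero => simp [P2]
  | succ n ih =>
    rw [P2_succ]
    refine dvd_mul_sub_one ih ?_
    rw [sub_sub_cancel_left, dvd_neg]
    exact pow_dvd_pow X (by omega)

theorem X_pow_dvd_P2inf_sub_one (a : ℕ) : X ^ a ∣ P2inf a - 1 := by
  refine X_pow_dvd_iff.mpr fun m hm => ?_
  rw [map_sub, P2inf, coeff_mk, ← map_sub]
  exact X_pow_dvd_iff.mp (X_pow_dvd_P2_sub_one a (m + 1)) m hm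

theorem X_pow_dvd_P2inf_sub_P2 {a : ℕ} (ha : 1 ≤ a) (n : ℕ) : X ^ n ∣ P2inf a - P2 a n := by
  refine X_pow_dvd_iff.mpr fun m hm => ?_
  have htail : X ^ (m + 1) ∣ P2 a n - P2 a (m + 1) := by
    rw [show n = m + 1 + (n - (m + 1)) by omega, P2_add, ← mul_sub_one]
    exact (pow_dvd_pow X (by omega)).trans ((X_pow_dvd_P2_sub_one _ _).mul_left _)
  have h := X_pow_dvd_iff.mp htail m m.lt_succ_self
  rw [map_sub] at h
  rw [map_sub, P2inf, coeff_mk]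
  linear_combination -h

theorem constantCoeff_P2_ne_zero {a : ℕ} (ha : 1 ≤ a) (n : ℕ) :
    constantCoeff (P2 a n) ≠ 0 :=
  constantCoeff_ne_zero_of_X_pow_dvd_sub_one (by omega) (X_pow_dvd_P2_sub_one a n)

theorem constantCoeff_P2inf_ne_zero {a : ℕ} (ha : 1 ≤ a) : constantCoeff (P2inf a) ≠ 0 :=
  constantCoeff_ne_zero_of_X_pow_dvd_sub_one (by omega) (X_pow_dvd_P2inf_sub_one a)

theorem P2inf_eq_P2_mul {a : ℕ} (ha : 1 ≤ a) (n : ℕ) :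
    P2inf a = P2 a n * P2inf (a + 2 * n) := by
  refine eq_of_forall_X_pow_dvd_sub fun N => ?_
  have h : P2inf a - P2 a n * P2inf (a + 2 * n) =
      (P2inf a - P2 a (n + N)) - P2 a n * (P2inf (a + 2 * n) - P2 (a + 2 * n) N) := by
    rw [P2_add]; ring
  rw [h]
  exact dvd_sub ((pow_dvd_pow X (by omega)).trans (X_pow_dvd_P2inf_sub_P2 ha _))
    ((X_pow_dvd_P2inf_sub_P2 (by omega) N).mul_left _)

theorem eq_P2inf_of_eq_one_sub_X_pow_mul (α : ℕ) {w : ℕ → ℚ⟦X⟧}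
    (hw : ∀ β, 1 ≤ β → w β = (1 - X ^ (α + β)) * w (β + 2))
    (hw_one : ∀ β, 1 ≤ β → X ^ β ∣ w β - 1) {β : ℕ} (hβ : 1 ≤ β) :
    w β = P2inf (α + β) := by
  have iterate : ∀ d, w β = P2 (α + β) d * w (β + 2 * d) := by
    intro d
    induction d with
    | zero => simp [P2]
    | succ d ih =>
      rw [ih, hw (β + 2 * d) (by omega), P2_succ, show β + 2 * (d + 1) = β + 2 * d + 2 by ring,
        show α + (β + 2 * d) = α + β + 2 * d by ring, mul_assoc]
  refine eq_of_forall_X_pow_dvd_sub fun d => ?_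
  rw [iterate d, show P2 (α + β) d * w (β + 2 * d) - P2inf (α + β) =
    P2 (α + β) d * (w (β + 2 * d) - 1) - (P2inf (α + β) - P2 (α + β) d) by ring]
  exact dvd_sub (((pow_dvd_pow X (by omega)).trans (hw_one _ (by omega))).mul_left _)
    (X_pow_dvd_P2inf_sub_P2 (by omega) d)

noncomputable def qBinomTerm (α n : ℕ) : ℚ⟦X⟧ := P2 α n * (P2 2 n)⁻¹

noncomputable def qBinomSeries (α β : ℕ) : ℚ⟦X⟧ :=
  orderSum fun n => qBinomTerm α n * X ^ (β * n)

theorem qBinomTerm_zero (α : ℕ) : qBinomTerm α 0 = 1 := by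
  simp [qBinomTerm, P2]

theorem qBinomTerm_mul_P2 (α n : ℕ) : qBinomTerm α n * P2 2 n = P2 α n := by
  rw [qBinomTerm, mul_assoc, PowerSeries.inv_mul_cancel _ (constantCoeff_P2_ne_zero (by omega) n),
    mul_one]

theorem qBinomTerm_succ_mul (α n : ℕ) :
    qBinomTerm α (n + 1) * (1 - X ^ (2 + 2 * n)) = qBinomTerm α n * (1 - X ^ (α + 2 * n)) := by
  have hu : (1 - X ^ (2 + 2 * n) : ℚ⟦X⟧)⁻¹ * (1 - X ^ (2 + 2 * n)) = 1 := by
    refine PowerSeries.inv_mul_cancel _ (constantCoeff_ne_zero_of_X_pow_dvd_sub_one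
      (n := 2 + 2 * n) (by omega) ?_)
    rw [sub_sub_cancel_left, dvd_neg]
  rw [qBinomTerm, qBinomTerm, P2_succ, P2_succ, PowerSeries.mul_inv_rev]
  linear_combination (P2 α n * (1 - X ^ (α + 2 * n)) * (P2 2 n)⁻¹) * hu

theorem one_sub_X_pow_mul_qBinomSeries (α : ℕ) {β : ℕ} (hβ : 1 ≤ β) :
    (1 - X ^ β) * qBinomSeries α β = (1 - X ^ (α + β)) * qBinomSeries α (β + 2) := by
  rw [qBinomSeries, qBinomSeries,
    one_sub_mul_orderSum _ fun n => X_pow_dvd_mul_X_pow _ (Nat.le_mul_of_pos_left n hβ),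
    one_sub_mul_orderSum _ fun n => X_pow_dvd_mul_X_pow _ (Nat.le_mul_of_pos_left n (by omega))]
  simp only [mul_zero]
  congr 2
  funext n
  linear_combination (X ^ (β * (n + 1)) : ℚ⟦X⟧) * qBinomTerm_succ_mul α n

theorem X_pow_dvd_qBinomSeries_sub_one (α : ℕ) {β : ℕ} (hβ : 1 ≤ β) :
    X ^ β ∣ qBinomSeries α β - 1 := by
  rw [qBinomSeries, orderSum_eq_add fun n => X_pow_dvd_mul_X_pow _ (Nat.le_mul_of_pos_left n hβ),
    qBinomTerm_zero, mul_zero, pow_zero, one_mul, add_sub_cancel_left]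
  exact X_pow_dvd_orderSum fun n => X_pow_dvd_mul_X_pow _ (Nat.le_mul_of_pos_right β n.succ_pos)

theorem P2inf_add_eq_qBinomSeries_mul (α : ℕ) {β : ℕ} (hβ : 1 ≤ β) :
    P2inf (α + β) = qBinomSeries α β * P2inf β := by
  refine (eq_P2inf_of_eq_one_sub_X_pow_mul α (w := fun β => qBinomSeries α β * P2inf β)
    (fun b hb => ?_) (fun b hb => ?_) hβ).symm
  · calc qBinomSeries α b * P2inf b = (1 - X ^ b) * qBinomSeries α b * P2inf (b + 2) := by
          rw [P2inf_eq_P2_mul hb 1, P2_one]; ring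
      _ = (1 - X ^ (α + b)) * (qBinomSeries α (b + 2) * P2inf (b + 2)) := by
          rw [one_sub_X_pow_mul_qBinomSeries α hb, mul_assoc]
  · exact dvd_mul_sub_one (X_pow_dvd_qBinomSeries_sub_one α hb) (X_pow_dvd_P2inf_sub_one b)

theorem P2inf_ratio_shift {a b : ℕ} (ha : 1 ≤ a) (hb : 1 ≤ b) (n : ℕ) :
    P2inf (b + 2 * n) * (P2inf (a + 2 * n))⁻¹ =
      P2inf b * (P2inf a)⁻¹ * (P2 a n * (P2 b n)⁻¹) := by
  rw [show P2inf b * (P2inf a)⁻¹ * (P2 a n * (P2 b n)⁻¹) =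
    P2inf b * P2 a n * (P2 b n * P2inf a)⁻¹ by rw [PowerSeries.mul_inv_rev]; ring]
  refine mul_inv_eq_mul_inv_of_mul_eq (constantCoeff_P2inf_ne_zero (by omega))
    (by rw [map_mul]
        exact mul_ne_zero (constantCoeff_P2_ne_zero hb n) (constantCoeff_P2inf_ne_zero ha))
    ?_
  rw [P2inf_eq_P2_mul ha n, P2inf_eq_P2_mul hb n]
  ring

theorem P2inf_ratio_mul_qBinomSeries_one (j : ℕ) :
    P2inf 2 * (P2inf 1)⁻¹ * qBinomSeries 1 (2 * j + 2) = P2 2 j * (P2 1 (j + 1))⁻¹ := by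
  rw [mul_right_comm]
  refine mul_inv_eq_mul_inv_of_mul_eq (constantCoeff_P2inf_ne_zero le_rfl)
    (constantCoeff_P2_ne_zero le_rfl _) ?_
  rw [P2inf_eq_P2_mul (a := 2) (by omega) j, P2inf_eq_P2_mul le_rfl (j + 1),
    show 1 + 2 * (j + 1) = 1 + (2 * j + 2) by ring, P2inf_add_eq_qBinomSeries_mul 1 (by omega),
    show 2 + 2 * j = 2 * j + 2 by ring]
  ring

theorem AEB_term_eq_orderSum {k : ℕ} (hk : 1 ≤ k) (n : ℕ) :
    X ^ (2 * n) * P2inf (2 * n + 2) * P2inf (2 * n + 2 * k) * (P2inf (2 * n + 1) ^ 2)⁻¹ =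
      orderSum fun j => qBinomTerm (2 * k - 1) j * X ^ j *
        (P2inf 2 * (P2inf 1)⁻¹ * (qBinomTerm 1 n * X ^ ((2 * j + 2) * n))) := by
  have hq : P2inf (2 * n + 2 * k) = qBinomSeries (2 * k - 1) (2 * n + 1) * P2inf (2 * n + 1) := by
    rw [← P2inf_add_eq_qBinomSeries_mul _ (by omega)]
    congr 1
    omega
  have hc : P2inf (2 * n + 1) * (P2inf (2 * n + 1))⁻¹ = 1 :=
    PowerSeries.mul_inv_cancel _ (constantCoeff_P2inf_ne_zero (by omega))
  have hr := P2inf_ratio_shift (a := 1) (b := 2) le_rfl (by omega) n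
  rw [add_comm 2, add_comm 1] at hr
  calc X ^ (2 * n) * P2inf (2 * n + 2) * P2inf (2 * n + 2 * k) * (P2inf (2 * n + 1) ^ 2)⁻¹
      = X ^ (2 * n) * (P2inf (2 * n + 2) * (P2inf (2 * n + 1))⁻¹) *
          qBinomSeries (2 * k - 1) (2 * n + 1) := by
        rw [hq, pow_two, PowerSeries.mul_inv_rev]
        linear_combination (X ^ (2 * n) * P2inf (2 * n + 2) * qBinomSeries (2 * k - 1) (2 * n + 1) *
          (P2inf (2 * n + 1))⁻¹) * hc
    _ = X ^ (2 * n) * (P2inf 2 * (P2inf 1)⁻¹ * qBinomTerm 1 n) *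
          qBinomSeries (2 * k - 1) (2 * n + 1) := by
        rw [hr, qBinomTerm]
    _ = _ := by
        rw [qBinomSeries,
          mul_orderSum _ fun j => X_pow_dvd_mul_X_pow _ (Nat.le_mul_of_pos_left j (by omega))]
        congr 1
        funext j
        ring

/-- For every `k ≥ 1`,
`F_{k,1}(q) = ∑_{n≥0} (q^{2k-1};q²)_n q^n / (q;q²)_{n+1}`
as formal power series in `q` (the right-hand side is also defined coefficientwise,
its `n`-th term having order at least `n`). -/
theorem stmt_6 (k : ℕ) (hk : 1 ≤ k) :
    AEB k = PowerSeries.mk fun m => ∑ n ∈ Finset.range (m + 1),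
      PowerSeries.coeff m
        (P2 (2 * k - 1) n * (PowerSeries.X : PowerSeries ℚ) ^ n * (P2 1 (n + 1))⁻¹) := by
  change orderSum _ = orderSum _
  calc orderSum _
      = orderSum fun n => orderSum fun j => qBinomTerm (2 * k - 1) j * X ^ j *
          (P2inf 2 * (P2inf 1)⁻¹ * (qBinomTerm 1 n * X ^ ((2 * j + 2) * n))) :=
        congrArg orderSum (funext (AEB_term_eq_orderSum hk))
    _ = orderSum fun j => qBinomTerm (2 * k - 1) j * X ^ j *
          (P2inf 2 * (P2inf 1)⁻¹ * qBinomSeries 1 (2 * j + 2)) := by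
        rw [orderSum_comm]
        congr 1
        funext j
        have hord : ∀ n, X ^ n ∣ qBinomTerm 1 n * X ^ ((2 * j + 2) * n) :=
          fun n => X_pow_dvd_mul_X_pow _ (Nat.le_mul_of_pos_left n (by omega))
        rw [qBinomSeries, mul_orderSum _ hord, mul_orderSum _ fun n => (hord n).mul_left _]
    _ = _ := by
        congr 1
        funext j
        rw [P2inf_ratio_mul_qBinomSeries_one, ← qBinomTerm_mul_P2 (2 * k - 1) j]
        ring
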